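/- Let G be a connected (P_5, C_5, triangle)-free graph with adjacent vertices x and y such that {x, y} is a dominating set of G and deg(y) ≤ deg(x). Then x is a Gallai vertex of G. -/

import Mathlib

open SimpleGraph

/-- `p` is a longest path of `G`: it is a path, and no path of `G` is longer. -/
def IsLongestPath {V : Type*} (G : SimpleGraph V) {u v : V} (p : G.Walk u v) : Prop :=
  p.IsPath ∧ ∀ (x y : V) (q : G.Walk x y), q.IsPath → q.length ≤ p.length

/-- `v` is a Gallai vertex of `G`: it lies on every longest path of `G`. -/
def IsGallaiVertex {V : Type*} (G : SimpleGraph V) (v : V) : Prop :=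
  ∀ (x y : V) (p : G.Walk x y), IsLongestPath G p → v ∈ p.support

/-- `G` is `H`-free: no induced subgraph of `G` is isomorphic to `H`. -/
def InducedFree {W V : Type*} (H : SimpleGraph W) (G : SimpleGraph V) : Prop :=
  IsEmpty (H ↪g G)

/-- The claw `K_{1,3}`. -/
def claw : SimpleGraph (Fin 1 ⊕ Fin 3) := completeBipartiteGraph (Fin 1) (Fin 3)

/-- `P_3 + 2P_1`: a three-vertex path together with two isolated vertices. -/
def P3_2P1 : SimpleGraph (Fin 5) := fromEdgeSet {s(0,1), s(1,2)}
/-- `K_3 + 2P_1`: a triangle together with two isolated vertices. -/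
def K3_2P1 : SimpleGraph (Fin 5) := fromEdgeSet {s(0,1), s(1,2), s(0,2)}
/-- `2P_2 + P_1`: two disjoint edges together with one isolated vertex. -/
def twoP2_P1 : SimpleGraph (Fin 5) := fromEdgeSet {s(0,1), s(2,3)}
/-- `P_2 + 3P_1`: an edge together with three isolated vertices. -/
def P2_3P1 : SimpleGraph (Fin 5) := fromEdgeSet {s(0,1)}
/-- `2P_2`: the disjoint union of two edges. -/
def twoP2 : SimpleGraph (Fin 4) := fromEdgeSet {s(0,1), s(2,3)}
/-- The paw `N_{1,0,0}`: a triangle with a pendant vertex. -/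
def paw : SimpleGraph (Fin 4) := fromEdgeSet {s(0,1), s(1,2), s(0,2), s(2,3)}
/-- The diamond: `K_4` minus an edge. -/
def diamond : SimpleGraph (Fin 4) := fromEdgeSet {s(0,1), s(0,2), s(0,3), s(1,2), s(1,3)}
/-- The bull `N_{1,1,0}`: a triangle with two pendant vertices at distinct vertices. -/
def bull : SimpleGraph (Fin 5) := fromEdgeSet {s(0,1), s(1,2), s(0,2), s(0,3), s(1,4)}
/-- `N_{2,0,0}`: a triangle with a path of length two appended at one vertex. -/
def N200 : SimpleGraph (Fin 5) := fromEdgeSet {s(0,1), s(1,2), s(0,2), s(0,3), s(3,4)}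
/-- `N_{1,0,0} + P_1`: the paw together with an isolated vertex. -/
def paw_P1 : SimpleGraph (Fin 5) := fromEdgeSet {s(0,1), s(1,2), s(0,2), s(0,3)}
/-- `K_3 + P_2`: a triangle together with a disjoint edge. -/
def K3_P2 : SimpleGraph (Fin 5) := fromEdgeSet {s(0,1), s(1,2), s(0,2), s(3,4)}

/-- `x` is a cut vertex of `G`: deleting `x` leaves a disconnected graph. -/
def IsCutVertex {V : Type*} (G : SimpleGraph V) (x : V) : Prop :=
  ¬ (G.induce {y | y ≠ x}).Preconnected

/-- A linear forest: an acyclic graph in which every vertex has degree at most two,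
i.e. a graph every connected component of which is a path. -/
def IsLinearForest {V : Type*} (G : SimpleGraph V) : Prop :=
  G.IsAcyclic ∧ ∀ v : V, (G.neighborSet v).ncard ≤ 2

/-- A 5-ring: the vertices can be partitioned into five nonempty stable sets
`S 0, …, S 4` such that (indices mod 5) `S i` is complete to `S (i±1)` and
anticomplete to `S (i±2)`. -/
def Is5Ring {V : Type*} (G : SimpleGraph V) : Prop :=
  ∃ S : Fin 5 → Set V,
    (∀ i, (S i).Nonempty) ∧
    (∀ v : V, ∃! i, v ∈ S i) ∧
    (∀ i, ∀ u ∈ S i, ∀ v ∈ S i, ¬ G.Adj u v) ∧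
    (∀ i, ∀ u ∈ S i, ∀ v ∈ S (i + 1), G.Adj u v) ∧
    (∀ i, ∀ u ∈ S i, ∀ v ∈ S (i + 2), ¬ G.Adj u v)

/-!
Triangle-freeness and the dominating edge `xy` make `G` bipartite with sides `N(y) ∋ x` and
`N(x) ∋ y` (coloured white and black), and `P₅`-freeness makes the neighbourhoods of the black
vertices a chain: otherwise `w - b - y - b' - w'` would be an induced `P₅`.

Let `P` be a longest path avoiding `x`. Both its ends are white (else `x` extends it), so it has
`k` black and `k + 1` white vertices. Whenever a black vertex `f` of `P` is given, the black
vertices of `P` with neighbourhood inside `N(f)` have strictly more path-neighbours, all in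
`N(f)`; this Hall-type condition lets us rebuild, greedily in order of increasing neighbourhood,
a path of the same length `2k` starting at `x` and using only black vertices of `P`. Since
`deg x ≥ deg y ≥ k + 2`, some black vertex lies off `P`, and prepending it gives a longer path.
-/

open Finset

namespace SimpleGraph

variable {V : Type*} {G : SimpleGraph V}

theorem cliqueFree_three_of_inducedFree (h : InducedFree (⊤ : SimpleGraph (Fin 3)) G) :
    G.CliqueFree 3 :=
  by_contra fun h' => h.false (topEmbeddingOfNotCliqueFree h')

theorem not_inducedFree_pathGraph_five {v₀ v₁ v₂ v₃ v₄ : V}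
    (h₀₁ : G.Adj v₀ v₁) (h₁₂ : G.Adj v₁ v₂) (h₂₃ : G.Adj v₂ v₃) (h₃₄ : G.Adj v₃ v₄)
    (h₀₂ : ¬G.Adj v₀ v₂) (h₀₃ : ¬G.Adj v₀ v₃) (h₀₄ : ¬G.Adj v₀ v₄)
    (h₁₃ : ¬G.Adj v₁ v₃) (h₁₄ : ¬G.Adj v₁ v₄) (h₂₄ : ¬G.Adj v₂ v₄) :
    ¬InducedFree (pathGraph 5) G := by
  let v : Fin 5 → V := ![v₀, v₁, v₂, v₃, v₄]
  have hv : ∀ i j, G.Adj (v i) (v j) ↔ (pathGraph 5).Adj i j := by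
    intro i j
    fin_cases i <;> fin_cases j <;>
      simp [v, pathGraph_adj, G.adj_comm v₁ v₀, G.adj_comm v₂ v₀, G.adj_comm v₃ v₀,
        G.adj_comm v₄ v₀, G.adj_comm v₂ v₁, G.adj_comm v₃ v₁, G.adj_comm v₄ v₁,
        G.adj_comm v₃ v₂, G.adj_comm v₄ v₂, G.adj_comm v₄ v₃, *]
  have hP₅ : ∀ i j : Fin 5, (∀ k, (pathGraph 5).Adj k i ↔ (pathGraph 5).Adj k j) → i = j := by
    simp only [pathGraph_adj]; decide
  have hinj : v.Injective := fun i j hij => hP₅ i j fun k => by rw [← hv, ← hv, hij]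
  exact fun h => h.false ⟨⟨v, hinj⟩, hv _ _⟩

namespace Walk

variable (C : G.Coloring Bool)

theorem length_eq_two_mul_countP_support :
    ∀ {u v : V} (q : G.Walk u v), C u = false → C v = false →
      q.length = 2 * q.support.countP (C ·)
  | _, _, .nil, hu, _ => by simp [hu]
  | _, _, .cons h .nil, hu, hv => absurd (hu.trans hv.symm) (C.valid h)
  | _, _, .cons (v := w) h (.cons h' q), hu, hv => by
    have hw : C w = true := by simpa [hu] using (C.valid h).symm
    have hq := length_eq_two_mul_countP_support q (by simpa [hw] using C.valid h') hv
    rw [length_cons, length_cons, hq]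
    simp [hu, hw]
    omega

theorem countP_not_support_eq_countP_support_add_one {u v : V} (q : G.Walk u v)
    (hu : C u = false) (hv : C v = false) :
    q.support.countP (!C ·) = q.support.countP (C ·) + 1 := by
  have hlen := q.length_eq_two_mul_countP_support C hu hv
  have hsplit := q.support.length_eq_countP_add_countP (C ·)
  simp only [length_support, Bool.not_eq_true, Bool.decide_eq_false] at hsplit
  omega

/-- A `Q`-vertex is black, hence interior, and both its neighbours on the walk lie in `M`. -/
theorem countP_support_lt_countP_support {Q M : V → Prop} [DecidablePred Q] [DecidablePred M]
    (hQ : ∀ a, Q a → C a = true) (hM : ∀ a b, Q a → G.Adj a b → M b) :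
    ∀ {u v : V} (q : G.Walk u v), C u = false → C v = false →
      0 < q.support.countP (Q ·) → q.support.countP (Q ·) < q.support.countP (M ·)
  | u, _, .nil, hu, _, hpos => by simp_all [show ¬ Q u from fun h => by simp [hQ u h] at hu]
  | _, _, .cons h .nil, hu, hv, _ => absurd (hu.trans hv.symm) (C.valid h)
  | u, _, .cons (v := w) h (.cons (v := u') h' q), hu, hv, hpos => by
    have hw : C w = true := by simpa [hu] using (C.valid h).symm
    have hu' : C u' = false := by simpa [hw] using C.valid h'
    have hQu : ¬ Q u := fun hQu => by simp [hQ u hQu] at hu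
    have ih := countP_support_lt_countP_support hQ hM q hu' hv
    simp only [support_cons, List.countP_cons, decide_eq_true_eq, hQu, if_false, add_zero]
      at hpos ⊢
    by_cases hQw : Q w
    · have hMu' : 0 < q.support.countP (M ·) :=
        List.countP_pos_iff.2 ⟨u', q.start_mem_support, by simpa using hM w u' hQw h'⟩
      simp only [hQw, hM w u hQw h.symm, if_true]
      rcases Nat.eq_zero_or_pos (q.support.countP (Q ·)) with h0 | h0
      · omega
      · have := ih h0
        omega
    · simp only [hQw, if_false, add_zero] at hpos ⊢
      have := ih hpos
      omega

end Walk

theorem exists_neighborFinset_subset_of_chain [G.LocallyFinite] {F : Finset V} (hne : F.Nonempty)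
    (hchain : ∀ f ∈ F, ∀ f' ∈ F,
      G.neighborFinset f ⊆ G.neighborFinset f' ∨ G.neighborFinset f' ⊆ G.neighborFinset f) :
    ∃ v ∈ F, ∀ f ∈ F, G.neighborFinset v ⊆ G.neighborFinset f := by
  obtain ⟨v, hvF, hvmin⟩ := F.exists_min_image (G.degree ·) hne
  refine ⟨v, hvF, fun f hf => (hchain v hvF f hf).elim id fun h => ?_⟩
  exact (eq_of_subset_of_card_le h (by simpa using hvmin f hf)).ge

theorem exists_zigzag_step [DecidableEq V] [G.LocallyFinite] {F X : Finset V} (hne : F.Nonempty)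
    (hchain : ∀ f ∈ F, ∀ f' ∈ F,
      G.neighborFinset f ⊆ G.neighborFinset f' ∨ G.neighborFinset f' ⊆ G.neighborFinset f)
    (hall : ∀ f ∈ F, #X + #{f' ∈ F | G.neighborFinset f' ⊆ G.neighborFinset f} ≤ G.degree f) :
    ∃ v ∈ F, ∃ b ∉ X, G.Adj v b ∧ (∀ f ∈ F.erase v, G.Adj b f) ∧
      ∀ f ∈ F.erase v,
        #(insert b X) + #{f' ∈ F.erase v | G.neighborFinset f' ⊆ G.neighborFinset f}
          ≤ G.degree f := by
  obtain ⟨v, hvF, hvsub⟩ := exists_neighborFinset_subset_of_chain hne hchain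
  have hvf : ∀ f ∈ F, v ∈ {f' ∈ F | G.neighborFinset f' ⊆ G.neighborFinset f} := fun f hf =>
    mem_filter.2 ⟨hvF, hvsub f hf⟩
  have hXv : #X < #(G.neighborFinset v) := by
    have := hall v hvF
    have := card_pos.2 ⟨v, hvf v hvF⟩
    rw [card_neighborFinset_eq_degree]
    omega
  obtain ⟨b, hbv, hbX⟩ := exists_mem_notMem_of_card_lt_card hXv
  refine ⟨v, hvF, b, hbX, (G.mem_neighborFinset _ _).1 hbv, fun f hf => ?_, fun f hf => ?_⟩
  · exact ((G.mem_neighborFinset _ _).1 (hvsub f (mem_of_mem_erase hf) hbv)).symm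
  · have := hall f (mem_of_mem_erase hf)
    have := card_pos.2 ⟨v, hvf f (mem_of_mem_erase hf)⟩
    rw [card_insert_of_notMem hbX, filter_erase, card_erase_of_mem (hvf f (mem_of_mem_erase hf))]
    omega

theorem exists_isPath_zigzag [DecidableEq V] [G.LocallyFinite] (F : Finset V)
    (hF : G.IsIndepSet F)
    (hchain : ∀ f ∈ F, ∀ f' ∈ F,
      G.neighborFinset f ⊆ G.neighborFinset f' ∨ G.neighborFinset f' ⊆ G.neighborFinset f)
    (c : V) (X : Finset V) (hcX : c ∈ X) (hc : ∀ f ∈ F, G.Adj c f)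
    (hall : ∀ f ∈ F, #X + #{f' ∈ F | G.neighborFinset f' ⊆ G.neighborFinset f} ≤ G.degree f) :
    ∃ (d : V) (q : G.Walk c d), q.IsPath ∧ q.length = 2 * #F ∧
      ∀ z ∈ q.support, z = c ∨ z ∈ F ∨ z ∉ X ∧ ∃ f ∈ F, G.Adj f z := by
  induction F using Finset.strongInduction generalizing c X with
  | H F ih =>
  rcases F.eq_empty_or_nonempty with rfl | hne
  · exact ⟨c, .nil, by simp, by simp, by simp⟩
  -- go `c → v → b`, where `v` has the smallest neighbourhood and `b ∉ X`; as `N(v) ⊆ N(f)` for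
  -- all `f ∈ F`, `b` is adjacent to the rest of `F`, which is routed from `b` recursively
  obtain ⟨v, hvF, b, hbX, hbv, hb, hall'⟩ := exists_zigzag_step hne hchain hall
  obtain ⟨d, q, hq, hlen, hsupp⟩ := ih (F.erase v) (erase_ssubset hvF) (hF.mono (by simp))
    (fun f hf f' hf' => hchain f (mem_of_mem_erase hf) f' (mem_of_mem_erase hf'))
    b (insert b X) (mem_insert_self b X) hb hall'
  have hFv : ∀ f ∈ F, ¬G.Adj f v := fun f hf hfv =>
    hF (mem_coe.2 hf) (mem_coe.2 hvF) hfv.ne hfv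
  have hcF : c ∉ F := fun h => G.irrefl (hc c h)
  refine ⟨d, .cons (hc v hvF) (.cons hbv q), ?_, ?_, ?_⟩
  · have hvq : v ∉ q.support := fun h => by
      rcases hsupp v h with rfl | h | ⟨-, f, hf, hfv⟩
      · exact G.irrefl hbv
      · simp at h
      · exact hFv f (mem_of_mem_erase hf) hfv
    have hcq : c ∉ q.support := fun h => by
      rcases hsupp c h with rfl | h | ⟨h, -⟩
      · exact hbX hcX
      · exact hcF (mem_of_mem_erase h)
      · exact h (mem_insert_of_mem hcX)
    simp only [Walk.cons_isPath_iff, Walk.support_cons, List.mem_cons, not_or]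
    exact ⟨⟨hq, hvq⟩, (hc v hvF).ne, hcq⟩
  · have := card_pos.2 hne
    rw [Walk.length_cons, Walk.length_cons, hlen, card_erase_of_mem hvF]
    omega
  · simp only [Walk.support_cons, List.mem_cons]
    rintro z (rfl | rfl | hz)
    · exact .inl rfl
    · exact .inr (.inl hvF)
    · rcases hsupp z hz with rfl | h | ⟨h, f, hf, hfz⟩
      · exact .inr (.inr ⟨hbX, v, hvF, hbv⟩)
      · exact .inr (.inl (mem_of_mem_erase h))
      · exact .inr (.inr ⟨fun h' => h (mem_insert_of_mem h'), f, mem_of_mem_erase hf, hfz⟩)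

theorem Walk.IsPath.exists_isPath_length_eq_of_chain [DecidableEq V] [G.LocallyFinite]
    (C : G.Coloring Bool) {s t : V} {p : G.Walk s t} (hp : p.IsPath)
    (hs : C s = false) (ht : C t = false) {c : V} (hcC : C c = false)
    (hc : ∀ f ∈ p.support, C f = true → G.Adj c f)
    (hchain : ∀ f ∈ p.support, ∀ f' ∈ p.support, C f = true → C f' = true →
      G.neighborFinset f ⊆ G.neighborFinset f' ∨ G.neighborFinset f' ⊆ G.neighborFinset f) :
    ∃ (d : V) (q : G.Walk c d), q.IsPath ∧ q.length = p.length ∧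
      ∀ z ∈ q.support, C z = true → z ∈ p.support := by
  set F : Finset V := {f ∈ p.support.toFinset | C f = true}
  have hmemF : ∀ f, f ∈ F ↔ f ∈ p.support ∧ C f = true := by simp [F]
  have hF : G.IsIndepSet F := fun a ha b hb _ hab =>
    C.valid hab (((hmemF a).1 ha).2.trans ((hmemF b).1 hb).2.symm)
  have hall : ∀ f ∈ F,
      #{c} + #{f' ∈ F | G.neighborFinset f' ⊆ G.neighborFinset f} ≤ G.degree f := by
    intro f hf
    obtain ⟨hfp, hCf⟩ := (hmemF f).1 hf
    have key := Walk.countP_support_lt_countP_support C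
      (Q := fun w => C w = true ∧ G.neighborFinset w ⊆ G.neighborFinset f)
      (M := (· ∈ G.neighborFinset f)) (fun _ h => h.1)
      (fun a b h hab => h.2 ((G.mem_neighborFinset a b).2 hab)) p hs ht
      (List.countP_pos_iff.2 ⟨f, hfp, by simp [hCf]⟩)
    calc #{c} + #{f' ∈ F | G.neighborFinset f' ⊆ G.neighborFinset f}
        = p.support.countP (fun w => C w = true ∧ G.neighborFinset w ⊆ G.neighborFinset f) + 1 :=
          by
          rw [card_singleton, filter_filter, hp.support_nodup.card_eq_countP, add_comm]
      _ ≤ p.support.countP (· ∈ G.neighborFinset f) := key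
      _ = #{z ∈ p.support.toFinset | z ∈ G.neighborFinset f} :=
          hp.support_nodup.card_eq_countP.symm
      _ ≤ G.degree f := by
          rw [← card_neighborFinset_eq_degree]
          exact card_le_card fun z hz => (mem_filter.1 hz).2
  obtain ⟨d, q, hq, hlen, hsupp⟩ := exists_isPath_zigzag F hF
    (fun f hf f' hf' => hchain f ((hmemF f).1 hf).1 f' ((hmemF f').1 hf').1
      ((hmemF f).1 hf).2 ((hmemF f').1 hf').2)
    c {c} (mem_singleton_self c) (fun f hf => hc f ((hmemF f).1 hf).1 ((hmemF f).1 hf).2) hall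
  refine ⟨d, q, hq, ?_, fun z hz hCz => ?_⟩
  · simp [hlen, p.length_eq_two_mul_countP_support C hs ht, F, hp.support_nodup.card_eq_countP]
  · rcases hsupp z hz with rfl | h | ⟨-, f, hf, hfz⟩
    · simp [hcC] at hCz
    · exact ((hmemF z).1 h).1
    · exact (C.valid hfz (((hmemF f).1 hf).2.trans hCz.symm)).elim

theorem CliqueFree.not_adj_of_adj_of_adj (h : G.CliqueFree 3) {x a b : V}
    (ha : G.Adj x a) (hb : G.Adj x b) : ¬G.Adj a b := fun hab =>
  isIndepSet_neighborSet_of_triangleFree G h x ha hb hab.ne hab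

section DominatingEdge

variable {x y : V}

def coloringOfDominatingEdge [DecidableRel G.Adj] (hK3 : G.CliqueFree 3)
    (hcover : ∀ v, G.Adj x v ∨ G.Adj y v) : G.Coloring Bool :=
  Coloring.mk (fun v => decide (G.Adj x v)) fun {a b} hab => by
    have hx := hK3.not_adj_of_adj_of_adj (x := x) (a := a) (b := b)
    have hy := hK3.not_adj_of_adj_of_adj (x := y) (a := a) (b := b)
    have := hcover a
    have := hcover b
    simp only [ne_eq, decide_eq_decide]
    tauto

@[simp]
theorem coloringOfDominatingEdge_apply [DecidableRel G.Adj] (hK3 : G.CliqueFree 3)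
    (hcover : ∀ v, G.Adj x v ∨ G.Adj y v) (v : V) :
    coloringOfDominatingEdge hK3 hcover v = decide (G.Adj x v) :=
  rfl

theorem neighborFinset_subset_or_subset [G.LocallyFinite] (hK3 : G.CliqueFree 3)
    (hcover : ∀ v, G.Adj x v ∨ G.Adj y v) (hP₅ : InducedFree (pathGraph 5) G) {w w' : V}
    (hw : G.Adj x w) (hw' : G.Adj x w') :
    G.neighborFinset w ⊆ G.neighborFinset w' ∨ G.neighborFinset w' ⊆ G.neighborFinset w := by
  by_contra! h
  obtain ⟨b, hb, hbw'⟩ := not_subset.1 h.1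
  obtain ⟨b', hb', hb'w⟩ := not_subset.1 h.2
  simp only [mem_neighborFinset] at hb hbw' hb' hb'w
  have hxy : G.Adj x y := (hcover y).resolve_right (G.irrefl)
  have hyb : G.Adj y b := (hcover b).resolve_left fun hxb => hK3.not_adj_of_adj_of_adj hw hxb hb
  have hyb' : G.Adj y b' :=
    (hcover b').resolve_left fun hxb' => hK3.not_adj_of_adj_of_adj hw' hxb' hb'
  -- `w - b - y - b' - w'` is an induced `P₅`
  exact not_inducedFree_pathGraph_five hb hyb.symm hyb' hb'.symm
    (hK3.not_adj_of_adj_of_adj hw hxy) hb'w (hK3.not_adj_of_adj_of_adj hw hw')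
    (hK3.not_adj_of_adj_of_adj hyb hyb') (fun h => hbw' h.symm)
    (hK3.not_adj_of_adj_of_adj hxy hw') hP₅

theorem exists_adj_notMem_support [G.LocallyFinite] (hK3 : G.CliqueFree 3)
    (hcover : ∀ v, G.Adj x v ∨ G.Adj y v) (hdeg : G.degree y ≤ G.degree x)
    {s t : V} {p : G.Walk s t} (hp : p.IsPath) (hxp : x ∉ p.support)
    (hs : ¬G.Adj x s) (ht : ¬G.Adj x t) : ∃ w, G.Adj x w ∧ w ∉ p.support := by
  classical
  let C := coloringOfDominatingEdge hK3 hcover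
  have hblack : #{z ∈ p.support.toFinset | G.Adj x z} = p.support.countP (C ·) := by
    simp [hp.support_nodup.card_eq_countP, C]
  have hwhite : #{z ∈ p.support.toFinset | ¬G.Adj x z} = p.support.countP (C ·) + 1 := by
    rw [← p.countP_not_support_eq_countP_support_add_one C (by simpa [C]) (by simpa [C])]
    simp [hp.support_nodup.card_eq_countP, C]
  have hNy : insert x {z ∈ p.support.toFinset | ¬G.Adj x z} ⊆ G.neighborFinset y := by
    intro z hz
    rw [mem_neighborFinset]
    rcases mem_insert.1 hz with rfl | hz
    · exact (hcover z).resolve_left (G.irrefl)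
    · exact (hcover z).resolve_left (mem_filter.1 hz).2
  have hy := card_le_card hNy
  rw [card_insert_of_notMem (by simp [hxp]), hwhite, card_neighborFinset_eq_degree] at hy
  obtain ⟨w, hw, hwp⟩ := exists_mem_notMem_of_card_lt_card
    (s := {z ∈ p.support.toFinset | G.Adj x z}) (t := G.neighborFinset x)
    (by rw [hblack, card_neighborFinset_eq_degree]; omega)
  rw [mem_neighborFinset] at hw
  exact ⟨w, hw, fun h => hwp (by simp [h, hw])⟩

end DominatingEdge

end SimpleGraph

namespace IsLongestPath

variable {V : Type*} {G : SimpleGraph V} {u v : V} {p : G.Walk u v}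

theorem reverse (h : IsLongestPath G p) : IsLongestPath G p.reverse :=
  ⟨h.1.reverse, by simpa using h.2⟩

theorem not_adj_start (h : IsLongestPath G p) {a : V} (ha : a ∉ p.support) : ¬G.Adj a u :=
  fun hau => by simpa using h.2 _ _ (p.cons hau) (h.1.cons ha)

end IsLongestPath

theorem stmt_16_general {V : Type} [Fintype V] (G : SimpleGraph V)
    (h1 : InducedFree (pathGraph 5) G)
    (h3 : InducedFree (⊤ : SimpleGraph (Fin 3)) G)
    (x y : V) (hxy : G.Adj x y)
    (hdom : ∀ v : V, v ∈ ({x, y} : Set V) ∨ ∃ d ∈ ({x, y} : Set V), G.Adj v d)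
    (hdeg : (G.neighborSet y).ncard ≤ (G.neighborSet x).ncard) :
    IsGallaiVertex G x := by
  classical
  have hK3 := cliqueFree_three_of_inducedFree h3
  have hcover : ∀ v, G.Adj x v ∨ G.Adj y v := fun v => by
    rcases hdom v with (rfl | rfl) | ⟨d, rfl | rfl, hvd⟩
    · exact .inr hxy.symm
    · exact .inl hxy
    · exact .inl hvd.symm
    · exact .inr hvd.symm
  have hdeg' : G.degree y ≤ G.degree x := by
    simpa only [← card_neighborFinset_eq_degree, ← coe_neighborFinset, Set.ncard_coe_finset]
      using hdeg
  let C := coloringOfDominatingEdge hK3 hcover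
  intro s t p hp
  by_contra hxp
  have hs : ¬G.Adj x s := hp.not_adj_start hxp
  have ht : ¬G.Adj x t := hp.reverse.not_adj_start (by simpa using hxp)
  obtain ⟨d, q, hq, hlen, hsupp⟩ := hp.1.exists_isPath_length_eq_of_chain C
    (by simpa [C]) (by simpa [C]) (c := x) (by simp [C]) (fun f _ hf => by simpa [C] using hf)
    (fun f _ f' _ hf hf' => neighborFinset_subset_or_subset hK3 hcover h1
      (by simpa [C] using hf) (by simpa [C] using hf'))
  obtain ⟨w, hxw, hwp⟩ := exists_adj_notMem_support hK3 hcover hdeg' hp.1 hxp hs ht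
  have hwq : w ∉ q.support := fun h => hwp (hsupp w h (by simpa [C] using hxw))
  simpa [hlen] using hp.2 _ _ (q.cons hxw.symm) (hq.cons hwq)

/-- In a connected `(P_5, C_5, triangle)`-free graph with a dominating edge `xy`
such that `deg y ≤ deg x`, the vertex `x` is a Gallai vertex. -/
theorem stmt_16 {V : Type} [Fintype V] (G : SimpleGraph V) (hG : G.Connected)
    (h1 : InducedFree (pathGraph 5) G) (h2 : InducedFree (cycleGraph 5) G)
    (h3 : InducedFree (⊤ : SimpleGraph (Fin 3)) G)
    (x y : V) (hxy : G.Adj x y)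
    (hdom : ∀ v : V, v ∈ ({x, y} : Set V) ∨ ∃ d ∈ ({x, y} : Set V), G.Adj v d)
    (hdeg : (G.neighborSet y).ncard ≤ (G.neighborSet x).ncard) :
    IsGallaiVertex G x :=
  stmt_16_general G h1 h3 x y hxy hdom hdeg
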